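/- arXiv:1201.6048 — 2 statements merged into one kernel-verified Lean document; each statement's English description precedes it below -/
import Mathlib

section
/- For every u ∈ L^1(ℝ^N) ∩ H^r(ℝ^N) with 0 < r < 1 (and r < 1/2 if N = 1), one has ∫ |u|^q dx ≤ C ‖u‖_{L^1}^θ ‖u‖_{H^r}^2, where θ = 2r/N, q = 2 + 2r/N, and C = C(N,r) > 0. -/
open MeasureTheory

abbrev Sp (N : ℕ) := EuclideanSpace ℝ (Fin N)

/-!
If `|v x| > t` and `|v y| ≤ t / 2` then `(v x - v y)² ≥ t² / 4`. By Chebyshev at least half of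
every ball of volume `8 ‖v‖₂² / t²` lies in `{|v| ≤ t / 2}`, so integrating the Gagliardo kernel
over such balls gives the weak-type bound `|{|v| > t}| ≲ [v]² ‖v‖₂^(2θ) t^(-2-2θ)`, `θ = 2r/N`.
Feeding Chebyshev (small `t`) and this bound (large `t`) into the layer-cake formula and
optimising the splitting level yields `(∫ |v|^(2+θ))² ≲ [v]² ‖v‖₂^(2+2θ)`, and Hölder's
interpolation `‖v‖₂^(2+2θ) ≤ ‖v‖₁^θ ∫ |v|^(2+θ)` turns this into `∫ |v|^(2+θ) ≲ ‖v‖₁^θ [v]²`.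
-/

open Set Metric Module
open scoped ENNReal NNReal

section MeasureSpace

variable {α : Type*} [MeasurableSpace α] {μ : Measure α} {f : α → ℝ}

lemma meas_lt_abs_le_lintegral_sq_div (hf : AEMeasurable f μ) {t : ℝ} (ht : 0 < t) :
    μ {x | t < |f x|} ≤ (∫⁻ x, ENNReal.ofReal (f x ^ 2) ∂μ) / ENNReal.ofReal (t ^ 2) := by
  refine (measure_mono fun x (hx : t < |f x|) => ?_).trans <|
    meas_ge_le_lintegral_div (hf.pow_const 2).ennreal_ofReal
      (ENNReal.ofReal_pos.2 (by positivity)).ne' ENNReal.ofReal_ne_top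
  exact ENNReal.ofReal_le_ofReal (by nlinarith [sq_abs (f x)])

lemma ofReal_le_measure_inter_abs_le (hf : AEMeasurable f μ)
    (hB : ∫⁻ x, ENNReal.ofReal (f x ^ 2) ∂μ ≠ ∞) {t : ℝ} (ht : 0 < t) {s : Set α}
    (hs : ENNReal.ofReal (8 * (∫⁻ x, ENNReal.ofReal (f x ^ 2) ∂μ).toReal / t ^ 2) ≤ μ s) :
    ENNReal.ofReal (4 * (∫⁻ x, ENNReal.ofReal (f x ^ 2) ∂μ).toReal / t ^ 2) ≤
      μ (s ∩ {x | |f x| ≤ t / 2}) := by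
  set B := ∫⁻ x, ENNReal.ofReal (f x ^ 2) ∂μ
  have hbad : μ {x | t / 2 < |f x|} ≤ ENNReal.ofReal (4 * B.toReal / t ^ 2) :=
    calc μ {x | t / 2 < |f x|} ≤ B / ENNReal.ofReal ((t / 2) ^ 2) :=
          meas_lt_abs_le_lintegral_sq_div hf (by positivity)
      _ = ENNReal.ofReal (4 * B.toReal / t ^ 2) := by
          rw [← ENNReal.ofReal_toReal hB, ← ENNReal.ofReal_div_of_pos (by positivity),
            ENNReal.toReal_ofReal ENNReal.toReal_nonneg]
          congr 1
          ring
  calc ENNReal.ofReal (4 * B.toReal / t ^ 2)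
      = ENNReal.ofReal (8 * B.toReal / t ^ 2) - ENNReal.ofReal (4 * B.toReal / t ^ 2) := by
        rw [← ENNReal.ofReal_sub _ (by positivity)]
        congr 1
        ring
    _ ≤ μ s - μ {x | t / 2 < |f x|} := by gcongr
    _ ≤ μ (s \ {x | t / 2 < |f x|}) := le_measure_sdiff
    _ ≤ μ (s ∩ {x | |f x| ≤ t / 2}) :=
        measure_mono fun x hx => ⟨hx.1, show |f x| ≤ t / 2 from le_of_not_gt hx.2⟩

lemma lintegral_sq_rpow_le_lintegral_abs_rpow_mul (hf : AEMeasurable f μ) {θ : ℝ} (hθ : 0 < θ) :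
    (∫⁻ x, ENNReal.ofReal (f x ^ 2) ∂μ) ^ (1 + θ) ≤
      (∫⁻ x, ENNReal.ofReal |f x| ∂μ) ^ θ * ∫⁻ x, ENNReal.ofReal (|f x| ^ (2 + θ)) ∂μ := by
  have h1θ : 0 < 1 + θ := by linarith
  have hsplit : ∀ x, ENNReal.ofReal |f x| ^ (θ / (1 + θ)) *
      ENNReal.ofReal (|f x| ^ (2 + θ)) ^ (1 / (1 + θ)) = ENNReal.ofReal (f x ^ 2) := by
    intro x
    have ha := abs_nonneg (f x)
    rw [ENNReal.ofReal_rpow_of_nonneg ha (by positivity),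
      ENNReal.ofReal_rpow_of_nonneg (by positivity) (by positivity), ← ENNReal.ofReal_mul
      (by positivity), ← Real.rpow_mul ha, ← Real.rpow_add' ha (by positivity),
      show θ / (1 + θ) + (2 + θ) * (1 / (1 + θ)) = (2 : ℕ) by field_simp; ring,
      Real.rpow_natCast, sq_abs]
  have hHolder := ENNReal.lintegral_mul_norm_pow_le hf.abs.ennreal_ofReal
    (hf.abs.pow_const (2 + θ)).ennreal_ofReal (by positivity : 0 ≤ θ / (1 + θ))
    (by positivity : 0 ≤ 1 / (1 + θ)) (by field_simp; ring)
  simp only [hsplit] at hHolder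
  calc _ ≤ ((∫⁻ x, ENNReal.ofReal |f x| ∂μ) ^ (θ / (1 + θ)) *
        (∫⁻ x, ENNReal.ofReal (|f x| ^ (2 + θ)) ∂μ) ^ (1 / (1 + θ))) ^ (1 + θ) :=
        ENNReal.rpow_le_rpow hHolder h1θ.le
    _ = _ := by
      rw [ENNReal.mul_rpow_of_nonneg _ _ h1θ.le, ← ENNReal.rpow_mul, ← ENNReal.rpow_mul,
        div_mul_cancel₀ _ h1θ.ne', one_div_mul_cancel h1θ.ne', ENNReal.rpow_one]

lemma lintegral_Ioc_zero_rpow_sub_one {θ Λ : ℝ} (hθ : 0 < θ) (hΛ : 0 ≤ Λ) :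
    ∫⁻ t in Ioc 0 Λ, ENNReal.ofReal (t ^ (θ - 1)) = ENNReal.ofReal (Λ ^ θ / θ) := by
  rw [← ofReal_integral_eq_lintegral_ofReal
    ((intervalIntegral.intervalIntegrable_rpow' (by linarith)).1)
    (ae_restrict_of_forall_mem measurableSet_Ioc fun t ht => Real.rpow_nonneg ht.1.le _),
    ← intervalIntegral.integral_of_le hΛ, integral_rpow (Or.inl (by linarith)),
    sub_add_cancel, Real.zero_rpow hθ.ne', sub_zero]

lemma lintegral_Ioi_rpow_neg_sub_one {θ Λ : ℝ} (hθ : 0 < θ) (hΛ : 0 < Λ) :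
    ∫⁻ t in Ioi Λ, ENNReal.ofReal (t ^ (-θ - 1)) = ENNReal.ofReal (Λ ^ (-θ) / θ) := by
  rw [← ofReal_integral_eq_lintegral_ofReal (integrableOn_Ioi_rpow_of_lt (by linarith) hΛ)
    (ae_restrict_of_forall_mem measurableSet_Ioi fun t ht => Real.rpow_nonneg
      (hΛ.trans ht).le _), integral_Ioi_rpow_of_lt (by linarith) hΛ, sub_add_cancel,
    neg_div_neg_eq]

lemma setLIntegral_Ioc_meas_lt_mul_rpow_le (hf : AEMeasurable f μ) {θ Λ : ℝ} (hθ : 0 < θ)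
    (hΛ : 0 ≤ Λ) :
    ∫⁻ t in Ioc 0 Λ, μ {x | t < |f x|} * ENNReal.ofReal (t ^ (1 + θ)) ≤
      (∫⁻ x, ENNReal.ofReal (f x ^ 2) ∂μ) * ENNReal.ofReal (Λ ^ θ / θ) := by
  set B := ∫⁻ x, ENNReal.ofReal (f x ^ 2) ∂μ
  calc ∫⁻ t in Ioc 0 Λ, μ {x | t < |f x|} * ENNReal.ofReal (t ^ (1 + θ))
      ≤ ∫⁻ t in Ioc 0 Λ, B * ENNReal.ofReal (t ^ (θ - 1)) := by
        refine setLIntegral_mono' measurableSet_Ioc fun t ht => ?_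
        calc μ {x | t < |f x|} * ENNReal.ofReal (t ^ (1 + θ))
            ≤ B / ENNReal.ofReal (t ^ 2) * ENNReal.ofReal (t ^ (1 + θ)) :=
              mul_le_mul_left (meas_lt_abs_le_lintegral_sq_div hf ht.1) _
          _ = B * ENNReal.ofReal (t ^ (θ - 1)) := by
              rw [ENNReal.div_eq_inv_mul, mul_comm _ B, mul_assoc, ← ENNReal.ofReal_inv_of_pos
                (by positivity [ht.1]), ← ENNReal.ofReal_mul (by positivity),
                ← Real.rpow_natCast, ← Real.rpow_neg ht.1.le, ← Real.rpow_add ht.1]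
              congr 3
              push_cast
              ring
    _ = B * ENNReal.ofReal (Λ ^ θ / θ) := by
        rw [lintegral_const_mul _ (by fun_prop), lintegral_Ioc_zero_rpow_sub_one hθ hΛ]

lemma setLIntegral_Ioi_meas_lt_mul_rpow_le {θ Λ : ℝ} (hθ : 0 < θ) (hΛ : 0 < Λ) {M : ℝ≥0∞}
    (hM : ∀ t : ℝ, 0 < t → μ {x | t < |f x|} ≤ M * ENNReal.ofReal (t ^ (-(2 + 2 * θ)))) :
    ∫⁻ t in Ioi Λ, μ {x | t < |f x|} * ENNReal.ofReal (t ^ (1 + θ)) ≤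
      M * ENNReal.ofReal (Λ ^ (-θ) / θ) := by
  calc ∫⁻ t in Ioi Λ, μ {x | t < |f x|} * ENNReal.ofReal (t ^ (1 + θ))
      ≤ ∫⁻ t in Ioi Λ, M * ENNReal.ofReal (t ^ (-θ - 1)) := by
        refine setLIntegral_mono' measurableSet_Ioi fun t ht => ?_
        have ht0 : 0 < t := hΛ.trans ht
        calc μ {x | t < |f x|} * ENNReal.ofReal (t ^ (1 + θ))
            ≤ M * ENNReal.ofReal (t ^ (-(2 + 2 * θ))) * ENNReal.ofReal (t ^ (1 + θ)) :=
              mul_le_mul_left (hM t ht0) _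
          _ = M * ENNReal.ofReal (t ^ (-θ - 1)) := by
              rw [mul_assoc, ← ENNReal.ofReal_mul (by positivity), ← Real.rpow_add ht0]
              congr 3
              ring
    _ = M * ENNReal.ofReal (Λ ^ (-θ) / θ) := by
        rw [lintegral_const_mul _ (by fun_prop), lintegral_Ioi_rpow_neg_sub_one hθ hΛ]

lemma lintegral_abs_rpow_le_of_meas_lt_le (hf : AEMeasurable f μ) {θ : ℝ} (hθ : 0 < θ)
    {M : ℝ≥0∞} (hM : ∀ t : ℝ, 0 < t → μ {x | t < |f x|} ≤ M * ENNReal.ofReal (t ^ (-(2 + 2 * θ))))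
    {s : ℝ} (hs : 0 < s) :
    ∫⁻ x, ENNReal.ofReal (|f x| ^ (2 + θ)) ∂μ ≤ ENNReal.ofReal ((2 + θ) / θ) *
      ((∫⁻ x, ENNReal.ofReal (f x ^ 2) ∂μ) * ENNReal.ofReal s + M * ENNReal.ofReal s⁻¹) := by
  set Λ := s ^ θ⁻¹
  have hΛ : 0 < Λ := by positivity
  have hΛθ : Λ ^ θ = s := Real.rpow_inv_rpow hs.le hθ.ne'
  calc ∫⁻ x, ENNReal.ofReal (|f x| ^ (2 + θ)) ∂μ
      = ENNReal.ofReal (2 + θ) *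
          ∫⁻ t in Ioi 0, μ {x | t < |f x|} * ENNReal.ofReal (t ^ (1 + θ)) := by
        rw [lintegral_rpow_eq_lintegral_meas_lt_mul μ (ae_of_all _ fun x => abs_nonneg _) hf.abs
          (by positivity), show 2 + θ - 1 = 1 + θ by ring]
    _ = ENNReal.ofReal (2 + θ) *
          ((∫⁻ t in Ioc 0 Λ, μ {x | t < |f x|} * ENNReal.ofReal (t ^ (1 + θ))) +
            ∫⁻ t in Ioi Λ, μ {x | t < |f x|} * ENNReal.ofReal (t ^ (1 + θ))) := by
        rw [← lintegral_union measurableSet_Ioi Ioc_disjoint_Ioi_same, Ioc_union_Ioi_eq_Ioi hΛ.le]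
    _ ≤ ENNReal.ofReal (2 + θ) * ((∫⁻ x, ENNReal.ofReal (f x ^ 2) ∂μ) *
          ENNReal.ofReal (Λ ^ θ / θ) + M * ENNReal.ofReal (Λ ^ (-θ) / θ)) := by
        gcongr
        · exact setLIntegral_Ioc_meas_lt_mul_rpow_le hf hθ hΛ.le
        · exact setLIntegral_Ioi_meas_lt_mul_rpow_le hθ hΛ hM
    _ = _ := by
        simp only [Real.rpow_neg hΛ.le, hΛθ, div_eq_mul_inv,
          ENNReal.ofReal_mul (by positivity : (0 : ℝ) ≤ 2 + θ), ENNReal.ofReal_mul hs.le,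
          ENNReal.ofReal_mul (inv_nonneg.2 hs.le)]
        ring

end MeasureSpace

lemma sq_le_four_mul_mul_of_forall_le_mul_add_div {x a b : ℝ} (hx : 0 ≤ x) (ha : 0 ≤ a)
    (hb : 0 ≤ b) (h : ∀ s : ℝ, 0 < s → x ≤ a * s + b / s) : x ^ 2 ≤ 4 * a * b := by
  by_contra! hlt
  have hx0 : 0 < x := hx.lt_of_ne (by rintro rfl; nlinarith [mul_nonneg ha hb])
  rcases ha.eq_or_lt with rfl | ha0
  · have := h (2 * b / x + 1) (by positivity)
    rw [zero_mul, zero_add, le_div_iff₀ (by positivity)] at this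
    nlinarith [mul_div_cancel₀ (2 * b) hx0.ne']
  · have := h (x / (2 * a)) (by positivity)
    have heq : a * (x / (2 * a)) + b / (x / (2 * a)) = x - (x ^ 2 - 4 * a * b) / (2 * x) := by
      field_simp; ring
    have : 0 < (x ^ 2 - 4 * a * b) / (2 * x) := div_pos (by linarith) (by positivity)
    linarith

lemma ENNReal.sq_le_four_mul_mul_of_forall_le_mul_add_mul_inv {x a b : ℝ≥0∞} (ha : a ≠ ∞)
    (hb : b ≠ ∞) (h : ∀ s : ℝ, 0 < s → x ≤ a * ENNReal.ofReal s + b * ENNReal.ofReal s⁻¹) :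
    x ^ 2 ≤ 4 * a * b := by
  have hx : x ≠ ∞ := ne_top_of_le_ne_top (by simp [ha, hb]) (h 1 one_pos)
  lift x to ℝ≥0 using hx
  lift a to ℝ≥0 using ha
  lift b to ℝ≥0 using hb
  have hreal : ∀ s : ℝ, 0 < s → (x : ℝ) ≤ a * s + b / s := by
    intro s hs
    have hs' := h s hs
    rw [ENNReal.ofReal, ENNReal.ofReal] at hs'
    have := NNReal.coe_le_coe.2 (ENNReal.coe_le_coe.1 (by exact_mod_cast hs'))
    simpa [Real.coe_toNNReal _ hs.le, Real.coe_toNNReal _ (inv_nonneg.2 hs.le), div_eq_mul_inv]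
      using this
  have := sq_le_four_mul_mul_of_forall_le_mul_add_div x.2 a.2 b.2 hreal
  exact_mod_cast (NNReal.coe_le_coe.1 (by push_cast; exact this) : x ^ 2 ≤ 4 * a * b)

/-- For `p = N + 2 r` on `ℝ^N` this is the squared `H^r` seminorm `[v]²`. On the diagonal the
kernel `edist x x ^ (-p)` is `∞`, but it is multiplied by `0`. -/
noncomputable def gagliardoEnergy {α : Type*} [PseudoEMetricSpace α] [MeasurableSpace α]
    (μ : Measure α) (p : ℝ) (v : α → ℝ) : ℝ≥0∞ :=
  ∫⁻ x, ∫⁻ y, ENNReal.ofReal ((v x - v y) ^ 2) * edist x y ^ (-p) ∂μ ∂μ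

lemma gagliardoEnergy_eq_ofReal_integral {E : Type*} [NormedAddCommGroup E] [MeasurableSpace E]
    {μ : Measure E} [SFinite μ] {v : E → ℝ} {p : ℝ}
    (h : Integrable (fun z : E × E => (v z.1 - v z.2) ^ 2 * ‖z.1 - z.2‖ ^ (-p)) (μ.prod μ)) :
    gagliardoEnergy μ p v =
      ENNReal.ofReal (∫ z, (v z.1 - v z.2) ^ 2 * ‖z.1 - z.2‖ ^ (-p) ∂μ.prod μ) := by
  have hpt : ∀ x y : E, ENNReal.ofReal ((v x - v y) ^ 2) * edist x y ^ (-p) =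
      ENNReal.ofReal ((v x - v y) ^ 2 * ‖x - y‖ ^ (-p)) := by
    intro x y
    rcases eq_or_ne x y with rfl | hxy
    · simp
    rw [ENNReal.ofReal_mul (sq_nonneg _), edist_dist, dist_eq_norm,
      ENNReal.ofReal_rpow_of_pos (norm_pos_iff.2 (sub_ne_zero.2 hxy))]
  simp only [gagliardoEnergy, hpt]
  rw [ofReal_integral_eq_lintegral_ofReal h (ae_of_all _ fun z => by positivity),
    lintegral_prod _ h.aemeasurable.ennreal_ofReal]

section MetricSpace

variable {α : Type*} [PseudoMetricSpace α] [MeasurableSpace α] [OpensMeasurableSpace α]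
  {μ : Measure α} {v : α → ℝ}

lemma meas_lt_abs_mul_le_gagliardoEnergy (hv : AEMeasurable v μ) {p t R : ℝ} (hp : 0 ≤ p)
    {L : ℝ≥0∞} (hL : ∀ x, L ≤ μ (ball x R ∩ {y | |v y| ≤ t / 2})) :
    μ {x | t < |v x|} * (ENNReal.ofReal ((t / 2) ^ 2) * ENNReal.ofReal R ^ (-p) * L) ≤
      gagliardoEnergy μ p v := by
  set c := ENNReal.ofReal ((t / 2) ^ 2) * ENNReal.ofReal R ^ (-p)
  have hpair : ∀ x y, t < |v x| → y ∈ ball x R ∩ {y | |v y| ≤ t / 2} →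
      c ≤ ENNReal.ofReal ((v x - v y) ^ 2) * edist x y ^ (-p) := by
    rintro x y hx ⟨hyx, hy : |v y| ≤ t / 2⟩
    gcongr ?_ * ?_
    · have hgap : t / 2 ≤ |v x - v y| := by linarith [abs_sub_abs_le_abs_sub (v x) (v y)]
      rw [← sq_abs (v x - v y)]
      exact ENNReal.ofReal_le_ofReal (pow_le_pow_left₀ ((abs_nonneg _).trans hy) hgap 2)
    · rw [ENNReal.rpow_neg, ENNReal.rpow_neg, edist_dist, dist_comm]
      exact ENNReal.inv_le_inv.2 (ENNReal.rpow_le_rpow (ENNReal.ofReal_le_ofReal hyx.le) hp)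
  have hinner : ∀ x, t < |v x| →
      c * L ≤ ∫⁻ y, ENNReal.ofReal ((v x - v y) ^ 2) * edist x y ^ (-p) ∂μ := by
    intro x hx
    calc c * L ≤ c * μ (ball x R ∩ {y | |v y| ≤ t / 2}) := by gcongr; exact hL x
      _ = ∫⁻ y, (ball x R ∩ {y | |v y| ≤ t / 2}).indicator (fun _ => c) y ∂μ :=
          (lintegral_indicator_const₀ (measurableSet_ball.nullMeasurableSet.inter
            (nullMeasurableSet_le hv.abs aemeasurable_const)) c).symm
      _ ≤ _ := lintegral_mono (indicator_le fun y hy => hpair x y hx hy)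
  calc μ {x | t < |v x|} * (c * L) = ∫⁻ x, {x | t < |v x|}.indicator (fun _ => c * L) x ∂μ := by
        rw [lintegral_indicator_const₀ (nullMeasurableSet_lt aemeasurable_const hv.abs), mul_comm]
    _ ≤ gagliardoEnergy μ p v := lintegral_mono (indicator_le hinner)

end MetricSpace

lemma mul_div_sq_rpow_one_add_div {c b t θ : ℝ} (hc : 0 < c) (hb : 0 < b) (ht : 0 < t) :
    (c * b / t ^ 2) ^ (1 + θ) / b = c ^ (1 + θ) * b ^ θ * t ^ (-(2 + 2 * θ)) := by
  rw [Real.div_rpow (by positivity) (by positivity), Real.mul_rpow hc.le hb.le,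
    Real.rpow_add hb, Real.rpow_one, ← Real.rpow_natCast, ← Real.rpow_mul ht.le,
    Real.rpow_neg ht.le]
  push_cast
  field_simp

lemma measureReal_ball_pos {α : Type*} [PseudoMetricSpace α] [ProperSpace α] [MeasurableSpace α]
    {μ : Measure α} [μ.IsOpenPosMeasure] [IsFiniteMeasureOnCompacts μ] (x : α) {r : ℝ}
    (hr : 0 < r) : 0 < μ.real (ball x r) :=
  ENNReal.toReal_pos (measure_ball_pos μ x hr).ne' measure_ball_lt_top.ne

section AddHaar

variable {E : Type*} [NormedAddCommGroup E] [NormedSpace ℝ E] [FiniteDimensional ℝ E]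
  [MeasurableSpace E] [BorelSpace E] {μ : Measure E} [μ.IsAddHaarMeasure] {N : ℕ} {v : E → ℝ}

lemma addHaar_ball_rpow_inv_finrank (hN : finrank ℝ E = N) (hN0 : 0 < N) (x : E) {s : ℝ}
    (hs : 0 < s) : μ (ball x ((s / μ.real (ball 0 1)) ^ (N : ℝ)⁻¹)) = ENNReal.ofReal s := by
  have hν := measureReal_ball_pos (μ := μ) 0 one_pos
  rw [Measure.addHaar_ball_of_pos μ x (by positivity), hN,
    Real.rpow_inv_natCast_pow (by positivity) hN0.ne', ← ofReal_measureReal measure_ball_lt_top.ne,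
    ← ENNReal.ofReal_mul (by positivity), div_mul_cancel₀ _ hν.ne']

lemma meas_lt_abs_le_gagliardoEnergy (hN : finrank ℝ E = N) (hN0 : 0 < N)
    (hv : AEMeasurable v μ) (hB : ∫⁻ x, ENNReal.ofReal (v x ^ 2) ∂μ ≠ ∞) {r t : ℝ} (hr : 0 < r)
    (ht : 0 < t) :
    μ {x | t < |v x|} ≤ ENNReal.ofReal ((8 / μ.real (ball 0 1)) ^ (1 + 2 * r / N)) *
      gagliardoEnergy μ (N + 2 * r) v * (∫⁻ x, ENNReal.ofReal (v x ^ 2) ∂μ) ^ (2 * r / N) *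
      ENNReal.ofReal (t ^ (-(2 + 2 * (2 * r / N)))) := by
  set B := ∫⁻ x, ENNReal.ofReal (v x ^ 2) ∂μ
  rcases eq_or_ne B 0 with hB0 | hB0
  · refine (meas_lt_abs_le_lintegral_sq_div hv ht).trans ?_
    simp [B, hB0]
  have hν := measureReal_ball_pos (μ := μ) 0 one_pos
  set b := B.toReal
  have hb : 0 < b := ENNReal.toReal_pos hB0 hB
  set u := 8 * b / t ^ 2 / μ.real (ball 0 1) with hu_def
  have hu : 0 < u := by positivity
  set R := u ^ (N : ℝ)⁻¹
  -- Balls of radius `R` have volume `8 B / t²`, so by Chebyshev half of each lies in `{|v| ≤ t/2}`.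
  have hgood : ∀ x, ENNReal.ofReal (4 * b / t ^ 2) ≤ μ (ball x R ∩ {y | |v y| ≤ t / 2}) :=
    fun x => ofReal_le_measure_inter_abs_le hv hB ht
      (addHaar_ball_rpow_inv_finrank hN hN0 x (by positivity)).ge
  have hfactor : ENNReal.ofReal ((t / 2) ^ 2) * ENNReal.ofReal R ^ (-((N : ℝ) + 2 * r)) *
      ENNReal.ofReal (4 * b / t ^ 2) = ENNReal.ofReal (u ^ (1 + 2 * r / N) / b)⁻¹ := by
    have hRpow : R ^ (-((N : ℝ) + 2 * r)) = (u ^ (1 + 2 * r / N))⁻¹ := by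
      rw [← Real.rpow_mul hu.le, ← Real.rpow_neg hu.le]
      congr 1
      field_simp
    rw [ENNReal.ofReal_rpow_of_pos (by positivity), hRpow, ← ENNReal.ofReal_mul (by positivity),
      ← ENNReal.ofReal_mul (by positivity)]
    congr 1
    field_simp
    ring
  have hweak := meas_lt_abs_mul_le_gagliardoEnergy hv (by positivity : (0 : ℝ) ≤ N + 2 * r) hgood
  rw [hfactor, ← ENNReal.le_div_iff_mul_le (Or.inl (by positivity)) (Or.inl ENNReal.ofReal_ne_top),
    ENNReal.div_eq_inv_mul, ← ENNReal.ofReal_inv_of_pos (by positivity), inv_inv, hu_def,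
    show 8 * b / t ^ 2 / μ.real (ball 0 1) = 8 / μ.real (ball 0 1) * b / t ^ 2 by ring,
    mul_div_sq_rpow_one_add_div (by positivity) hb ht] at hweak
  refine hweak.trans_eq ?_
  rw [ENNReal.ofReal_mul (by positivity), ENNReal.ofReal_mul (by positivity),
    ← ENNReal.ofReal_rpow_of_nonneg hb.le (by positivity), ENNReal.ofReal_toReal hB]
  ring

theorem exists_lintegral_abs_rpow_le_gagliardoEnergy (hN : finrank ℝ E = N) (hN0 : 0 < N)
    {r : ℝ} (hr : 0 < r) :
    ∃ C : ℝ, 0 < C ∧ ∀ v : E → ℝ, AEMeasurable v μ →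
      ∫⁻ x, ENNReal.ofReal (v x ^ 2) ∂μ ≠ ∞ → gagliardoEnergy μ (N + 2 * r) v ≠ ∞ →
      ∫⁻ x, ENNReal.ofReal (|v x| ^ (2 + 2 * r / N)) ∂μ ≤
        ENNReal.ofReal C * (∫⁻ x, ENNReal.ofReal |v x| ∂μ) ^ (2 * r / N) *
          gagliardoEnergy μ (N + 2 * r) v := by
  set θ := 2 * r / N
  have hθ : 0 < θ := by positivity
  have hν := measureReal_ball_pos (μ := μ) 0 one_pos
  set c := (8 / μ.real (ball 0 1)) ^ (1 + θ)
  set K := (2 + θ) / θ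
  refine ⟨4 * K ^ 2 * c, by positivity, fun v hv hB hD => ?_⟩
  set S := ∫⁻ x, ENNReal.ofReal (|v x| ^ (2 + θ)) ∂μ
  set A := ∫⁻ x, ENNReal.ofReal |v x| ∂μ
  set B := ∫⁻ x, ENNReal.ofReal (v x ^ 2) ∂μ
  set D := gagliardoEnergy μ (N + 2 * r) v
  set M := ENNReal.ofReal c * D * B ^ θ
  have hM : M ≠ ∞ := by finiteness
  have hlayer : ∀ s : ℝ, 0 < s →
      S ≤ ENNReal.ofReal K * (B * ENNReal.ofReal s + M * ENNReal.ofReal s⁻¹) :=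
    fun s hs => lintegral_abs_rpow_le_of_meas_lt_le hv hθ
      (fun t ht => meas_lt_abs_le_gagliardoEnergy hN hN0 hv hB hr ht) hs
  have hS : S ≠ ∞ := ne_top_of_le_ne_top (by finiteness) (hlayer 1 one_pos)
  have hsq : S ^ 2 ≤ 4 * (ENNReal.ofReal K * B) * (ENNReal.ofReal K * M) :=
    ENNReal.sq_le_four_mul_mul_of_forall_le_mul_add_mul_inv (by finiteness) (by finiteness)
      fun s hs => (hlayer s hs).trans_eq (by ring)
  have hinterp : B ^ (1 + θ) ≤ A ^ θ * S := lintegral_sq_rpow_le_lintegral_abs_rpow_mul hv hθ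
  rcases eq_or_ne S 0 with hS0 | hS0
  · simp [hS0]
  refine (ENNReal.mul_le_mul_iff_right hS0 hS).1 ?_
  calc S * S = S ^ 2 := (sq S).symm
    _ ≤ ENNReal.ofReal (4 * K ^ 2 * c) * D * B ^ (1 + θ) := by
        refine hsq.trans_eq ?_
        rw [ENNReal.rpow_add_of_nonneg _ _ zero_le_one hθ.le, ENNReal.rpow_one,
          ENNReal.ofReal_mul (by positivity), ENNReal.ofReal_mul (by positivity),
          ENNReal.ofReal_pow (by positivity), ENNReal.ofReal_ofNat]
        ring
    _ ≤ ENNReal.ofReal (4 * K ^ 2 * c) * D * (A ^ θ * S) := by gcongr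
    _ = S * (ENNReal.ofReal (4 * K ^ 2 * c) * A ^ θ * D) := by ring

end AddHaar

theorem stmt4_general (N : ℕ) (hN : 0 < N) (r : ℝ) (hr : 0 < r) :
    ∃ C : ℝ, 0 < C ∧ ∀ u : Sp N → ℝ,
      Integrable u → Integrable (fun x => (u x) ^ 2) →
      Integrable (fun p : Sp N × Sp N =>
        (u p.1 - u p.2) ^ 2 * ‖p.1 - p.2‖ ^ (-((N : ℝ) + 2 * r))) →
      ∫ x, |u x| ^ ((2 : ℝ) + 2 * r / N) ≤
        C * (∫ x, |u x|) ^ (2 * r / (N : ℝ)) *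
          ((∫ x, (u x) ^ 2) + ∫ p : Sp N × Sp N,
            (u p.1 - u p.2) ^ 2 * ‖p.1 - p.2‖ ^ (-((N : ℝ) + 2 * r))) := by
  obtain ⟨C, hC, hbound⟩ := exists_lintegral_abs_rpow_le_gagliardoEnergy
    (μ := (volume : Measure (Sp N))) finrank_euclideanSpace_fin hN hr
  refine ⟨C, hC, fun u hu hu2 hgag => ?_⟩
  rw [Measure.volume_eq_prod] at hgag ⊢
  have hA := ofReal_integral_eq_lintegral_ofReal hu.abs (ae_of_all _ fun x => abs_nonneg (u x))
  have hB := ofReal_integral_eq_lintegral_ofReal hu2 (ae_of_all _ fun x => sq_nonneg (u x))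
  have hD := gagliardoEnergy_eq_ofReal_integral hgag
  rw [integral_eq_lintegral_of_nonneg_ae (ae_of_all _ fun x => by positivity)
    (hu.1.aemeasurable.abs.pow_const _).aestronglyMeasurable]
  refine ENNReal.toReal_le_of_le_ofReal (by positivity) <| (hbound u hu.1.aemeasurable
    (hB ▸ ENNReal.ofReal_ne_top) (hD ▸ ENNReal.ofReal_ne_top)).trans ?_
  rw [← hA, hD, ENNReal.ofReal_rpow_of_nonneg (by positivity) (by positivity),
    ← ENNReal.ofReal_mul hC.le, ← ENNReal.ofReal_mul (by positivity)]
  refine ENNReal.ofReal_le_ofReal ?_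
  gcongr
  exact le_add_of_nonneg_left (integral_nonneg fun x => sq_nonneg _)

/-- Embedding inequality: `∫ |u|^q ≤ C ‖u‖_{L¹}^θ ‖u‖_{H^r}²` with `θ = 2r/N`, `q = 2 + 2r/N`. -/
theorem stmt4 (N : ℕ) (hN : 0 < N) (r : ℝ) (hr : 0 < r) (hr1 : r < 1)
    (hN1 : N = 1 → r < 1 / 2) :
    ∃ C : ℝ, 0 < C ∧ ∀ u : Sp N → ℝ,
      Integrable u → Integrable (fun x => (u x) ^ 2) →
      Integrable (fun p : Sp N × Sp N =>
        (u p.1 - u p.2) ^ 2 * ‖p.1 - p.2‖ ^ (-((N : ℝ) + 2 * r))) →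
      ∫ x, |u x| ^ ((2 : ℝ) + 2 * r / N) ≤
        C * (∫ x, |u x|) ^ (2 * r / (N : ℝ)) *
          ((∫ x, (u x) ^ 2) + ∫ p : Sp N × Sp N,
            (u p.1 - u p.2) ^ 2 * ‖p.1 - p.2‖ ^ (-((N : ℝ) + 2 * r))) :=
  stmt4_general N hN r hr
end

section
/- Let u, φ : ℝ^N → ℝ with u, (u-φ)^+ ∈ H^r(ℝ^N), 0 < r < 1. Writing u_φ^+ = (u-φ)^+ and u_φ^- = (u-φ) ∧ 0 so that u = φ + u_φ^+ + u_φ^-, one has the decomposition B_r(u_φ^+, u) = B_r(u_φ^+, u_φ^+) + B_r(u_φ^+, φ) + B_r(u_φ^+, u_φ^-), and moreover B_r(u_φ^+, u_φ^-) ≥ 0. -/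
/-!
The decomposition is linearity of `B_r` in its second argument, applied to the pointwise
identity `u = u_φ⁺ + φ + u_φ⁻`. The cross term is nonnegative because its integrand is:
for reals `a, b`, `(a⁺ - b⁺) (a⁻ - b⁻) = -(a⁺ b⁻ + b⁺ a⁻) ≥ 0` since `a⁺ a⁻ = b⁺ b⁻ = 0`.
-/

open MeasureTheory

theorem max_zero_sub_mul_min_zero_sub_nonneg {R : Type*} [CommRing R] [LinearOrder R]
    [IsStrictOrderedRing R] (a b : R) : 0 ≤ (max a 0 - max b 0) * (min a 0 - min b 0) := by
  rcases le_total a 0 with ha | ha <;> rcases le_total b 0 with hb | hb <;>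
    simp only [max_eq_left, max_eq_right, min_eq_left, min_eq_right, ha, hb] <;>
    nlinarith

section KernelForm

variable {α : Type*} {K : α → α → ℝ} {v w w' : α → ℝ}

def kernelIntegrand (K : α → α → ℝ) (v w : α → ℝ) (p : α × α) : ℝ :=
  (v p.1 - v p.2) * K p.1 p.2 * (w p.1 - w p.2)

theorem kernelIntegrand_add_right :
    kernelIntegrand K v (w + w') = kernelIntegrand K v w + kernelIntegrand K v w' := by
  ext p
  simp only [kernelIntegrand, Pi.add_apply]
  ring

variable [MeasurableSpace α] {μ : Measure (α × α)}

/-- The form `B(v, w) = ∬ (v x - v y) K(x, y) (w x - w y) dμ(x, y)`; for `μ = volume` and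
`K x y = ‖x - y‖ ^ (-(N + 2r))` this is the paper's `B_r`. -/
noncomputable def kernelForm (μ : Measure (α × α)) (K : α → α → ℝ) (v w : α → ℝ) : ℝ :=
  ∫ p, kernelIntegrand K v w p ∂μ

theorem MeasureTheory.Integrable.kernelIntegrand_add_right
    (hw : Integrable (kernelIntegrand K v w) μ)
    (hw' : Integrable (kernelIntegrand K v w') μ) :
    Integrable (kernelIntegrand K v (w + w')) μ := by
  rw [_root_.kernelIntegrand_add_right]
  exact hw.add hw'

theorem kernelForm_add_right (hw : Integrable (kernelIntegrand K v w) μ)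
    (hw' : Integrable (kernelIntegrand K v w') μ) :
    kernelForm μ K v (w + w') = kernelForm μ K v w + kernelForm μ K v w' := by
  simp only [kernelForm, kernelIntegrand_add_right, Pi.add_apply]
  exact integral_add hw hw'

theorem kernelForm_posPart_negPart_nonneg (hK : ∀ x y, 0 ≤ K x y) (f : α → ℝ) :
    0 ≤ kernelForm μ K (fun x => max (f x) 0) (fun x => min (f x) 0) := by
  refine integral_nonneg fun p => ?_
  have h := mul_nonneg (hK p.1 p.2) (max_zero_sub_mul_min_zero_sub_nonneg (f p.1) (f p.2))
  simp only [kernelIntegrand, Pi.zero_apply]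
  convert h using 1
  ring

end KernelForm

theorem eq_max_sub_zero_add_add_min_sub_zero {α : Type*} (u φ : α → ℝ) :
    u = (fun x => max (u x - φ x) 0) + φ + fun x => min (u x - φ x) 0 := by
  ext x
  have := max_add_min (u x - φ x) 0
  simp only [Pi.add_apply]
  linarith

theorem stmt14_general (N : ℕ) (r : ℝ)
    (u φ : Sp N → ℝ)
    (h1 : Integrable (fun p : Sp N × Sp N =>
      (max (u p.1 - φ p.1) 0 - max (u p.2 - φ p.2) 0) * ‖p.1 - p.2‖ ^ (-((N : ℝ) + 2 * r)) *
        (max (u p.1 - φ p.1) 0 - max (u p.2 - φ p.2) 0)))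
    (h2 : Integrable (fun p : Sp N × Sp N =>
      (max (u p.1 - φ p.1) 0 - max (u p.2 - φ p.2) 0) * ‖p.1 - p.2‖ ^ (-((N : ℝ) + 2 * r)) *
        (φ p.1 - φ p.2)))
    (h3 : Integrable (fun p : Sp N × Sp N =>
      (max (u p.1 - φ p.1) 0 - max (u p.2 - φ p.2) 0) * ‖p.1 - p.2‖ ^ (-((N : ℝ) + 2 * r)) *
        (min (u p.1 - φ p.1) 0 - min (u p.2 - φ p.2) 0))) :
    (∫ p : Sp N × Sp N,
        (max (u p.1 - φ p.1) 0 - max (u p.2 - φ p.2) 0) * ‖p.1 - p.2‖ ^ (-((N : ℝ) + 2 * r)) *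
          (u p.1 - u p.2)) =
      (∫ p : Sp N × Sp N,
        (max (u p.1 - φ p.1) 0 - max (u p.2 - φ p.2) 0) * ‖p.1 - p.2‖ ^ (-((N : ℝ) + 2 * r)) *
          (max (u p.1 - φ p.1) 0 - max (u p.2 - φ p.2) 0)) +
      (∫ p : Sp N × Sp N,
        (max (u p.1 - φ p.1) 0 - max (u p.2 - φ p.2) 0) * ‖p.1 - p.2‖ ^ (-((N : ℝ) + 2 * r)) *
          (φ p.1 - φ p.2)) +
      (∫ p : Sp N × Sp N,
        (max (u p.1 - φ p.1) 0 - max (u p.2 - φ p.2) 0) * ‖p.1 - p.2‖ ^ (-((N : ℝ) + 2 * r)) *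
          (min (u p.1 - φ p.1) 0 - min (u p.2 - φ p.2) 0)) ∧
    0 ≤ ∫ p : Sp N × Sp N,
        (max (u p.1 - φ p.1) 0 - max (u p.2 - φ p.2) 0) * ‖p.1 - p.2‖ ^ (-((N : ℝ) + 2 * r)) *
          (min (u p.1 - φ p.1) 0 - min (u p.2 - φ p.2) 0) := by
  set K : Sp N → Sp N → ℝ := fun x y => ‖x - y‖ ^ (-((N : ℝ) + 2 * r))
  set uPos : Sp N → ℝ := fun x => max (u x - φ x) 0
  set uNeg : Sp N → ℝ := fun x => min (u x - φ x) 0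
  have hK : ∀ x y, 0 ≤ K x y := fun x y => Real.rpow_nonneg (norm_nonneg _) _
  refine ⟨?_, kernelForm_posPart_negPart_nonneg hK (u - φ)⟩
  change kernelForm volume K uPos u =
    kernelForm volume K uPos uPos + kernelForm volume K uPos φ + kernelForm volume K uPos uNeg
  conv_lhs => rw [eq_max_sub_zero_add_add_min_sub_zero u φ]
  rw [kernelForm_add_right (h1.kernelIntegrand_add_right h2) h3, kernelForm_add_right h1 h2]

/-- Decomposition `B_r(u_φ⁺, u) = B_r(u_φ⁺, u_φ⁺) + B_r(u_φ⁺, φ) + B_r(u_φ⁺, u_φ⁻)`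
and nonnegativity of the cross term `B_r(u_φ⁺, u_φ⁻)`. -/
theorem stmt14 (N : ℕ) (hN : 0 < N) (r : ℝ) (hr : 0 < r) (hr1 : r < 1)
    (u φ : Sp N → ℝ)
    (h1 : Integrable (fun p : Sp N × Sp N =>
      (max (u p.1 - φ p.1) 0 - max (u p.2 - φ p.2) 0) * ‖p.1 - p.2‖ ^ (-((N : ℝ) + 2 * r)) *
        (max (u p.1 - φ p.1) 0 - max (u p.2 - φ p.2) 0)))
    (h2 : Integrable (fun p : Sp N × Sp N =>
      (max (u p.1 - φ p.1) 0 - max (u p.2 - φ p.2) 0) * ‖p.1 - p.2‖ ^ (-((N : ℝ) + 2 * r)) *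
        (φ p.1 - φ p.2)))
    (h3 : Integrable (fun p : Sp N × Sp N =>
      (max (u p.1 - φ p.1) 0 - max (u p.2 - φ p.2) 0) * ‖p.1 - p.2‖ ^ (-((N : ℝ) + 2 * r)) *
        (min (u p.1 - φ p.1) 0 - min (u p.2 - φ p.2) 0))) :
    (∫ p : Sp N × Sp N,
        (max (u p.1 - φ p.1) 0 - max (u p.2 - φ p.2) 0) * ‖p.1 - p.2‖ ^ (-((N : ℝ) + 2 * r)) *
          (u p.1 - u p.2)) =
      (∫ p : Sp N × Sp N,
        (max (u p.1 - φ p.1) 0 - max (u p.2 - φ p.2) 0) * ‖p.1 - p.2‖ ^ (-((N : ℝ) + 2 * r)) *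
          (max (u p.1 - φ p.1) 0 - max (u p.2 - φ p.2) 0)) +
      (∫ p : Sp N × Sp N,
        (max (u p.1 - φ p.1) 0 - max (u p.2 - φ p.2) 0) * ‖p.1 - p.2‖ ^ (-((N : ℝ) + 2 * r)) *
          (φ p.1 - φ p.2)) +
      (∫ p : Sp N × Sp N,
        (max (u p.1 - φ p.1) 0 - max (u p.2 - φ p.2) 0) * ‖p.1 - p.2‖ ^ (-((N : ℝ) + 2 * r)) *
          (min (u p.1 - φ p.1) 0 - min (u p.2 - φ p.2) 0)) ∧
    0 ≤ ∫ p : Sp N × Sp N,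
        (max (u p.1 - φ p.1) 0 - max (u p.2 - φ p.2) 0) * ‖p.1 - p.2‖ ^ (-((N : ℝ) + 2 * r)) *
          (min (u p.1 - φ p.1) 0 - min (u p.2 - φ p.2) 0) :=
  stmt14_general N r u φ h1 h2 h3
end
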